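/- arXiv:2008.04613 — 3 statements merged into one kernel-verified Lean document; each statement's English description precedes it below -/
import Mathlib

section
/- For every matrix game Z ∈ ℝ^{l×m} (with l, m ≥ 1) there exist v* ∈ ℝ, a mixed strategy x* ∈ Δ_l for player 1 and a mixed strategy y* ∈ Δ_m for player 2 such that: (i) x*ᵀZ y ≥ v* for every y ∈ Δ_m, i.e., under x* player 1's expected utility is at least v* regardless of player 2's strategy; and (ii) xᵀZ y* ≤ v* for every x ∈ Δ_l, i.e., under y* player 2's expected utility −xᵀZ y* is at least −v* regardless of player 1's strategy. (Minimax theorem; v* is called the value of the game.) -/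
/-!
The payoff `xᵀ Z y` is bilinear, so on the compact convex simplices it is continuous and
linear (hence quasiconvex and quasiconcave) in each variable. Sion's minimax theorem then
yields a saddle point `(x⋆, y⋆)`, and `v⋆ = x⋆ᵀ Z y⋆` is the value of the game.
-/

open Finset

/-- Expected utility of player 1 in the matrix game `Z` under mixed strategies `x` and `y`:
`xᵀ Z y = ∑_{i,j} x_i z_{ij} y_j`. -/
def matPayoff {l m : ℕ} (Z : Matrix (Fin l) (Fin m) ℝ)
    (x : Fin l → ℝ) (y : Fin m → ℝ) : ℝ :=
  ∑ i, ∑ j, x i * Z i j * y j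

section Bilinear

variable {E F : Type*}
  [TopologicalSpace E] [AddCommGroup E] [Module ℝ E] [IsTopologicalAddGroup E]
  [ContinuousSMul ℝ E] [T2Space E] [FiniteDimensional ℝ E]
  [TopologicalSpace F] [AddCommGroup F] [Module ℝ F] [IsTopologicalAddGroup F]
  [ContinuousSMul ℝ F] [T2Space F] [FiniteDimensional ℝ F]

theorem LinearMap.exists_isSaddlePointOn (B : E →ₗ[ℝ] F →ₗ[ℝ] ℝ) {X : Set E} {Y : Set F}
    (hXc : Convex ℝ X) (hXk : IsCompact X) (hXne : X.Nonempty)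
    (hYc : Convex ℝ Y) (hYk : IsCompact Y) (hYne : Y.Nonempty) :
    ∃ a ∈ X, ∃ b ∈ Y, IsSaddlePointOn X Y (fun x y ↦ B x y) a b :=
  Sion.exists_isSaddlePointOn hXne hXc hXk
    (fun y _ ↦
      (B.flip y).continuous_of_finiteDimensional.lowerSemicontinuous.lowerSemicontinuousOn _)
    (fun y _ ↦ ((B.flip y).convexOn hXc).quasiconvexOn)
    hYc hYne hYk
    (fun x _ ↦ (B x).continuous_of_finiteDimensional.upperSemicontinuous.upperSemicontinuousOn _)
    (fun x _ ↦ ((B x).concaveOn hYc).quasiconcaveOn)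

end Bilinear

theorem matPayoff_eq_toLinearMap₂' {l m : ℕ} (Z : Matrix (Fin l) (Fin m) ℝ)
    (x : Fin l → ℝ) (y : Fin m → ℝ) : matPayoff Z x y = Matrix.toLinearMap₂' ℝ Z x y := by
  simp only [matPayoff, Matrix.toLinearMap₂'_apply, smul_eq_mul]
  exact sum_congr rfl fun _ _ ↦ sum_congr rfl fun _ _ ↦ by ring

/-- Minimax theorem: every matrix game has a value `v⋆` together with optimal
mixed strategies `x⋆` for player 1 and `y⋆` for player 2. -/
theorem minimax_theorem (l m : ℕ) (hl : 1 ≤ l) (hm : 1 ≤ m)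
    (Z : Matrix (Fin l) (Fin m) ℝ) :
    ∃ (v : ℝ) (xs : Fin l → ℝ) (ys : Fin m → ℝ),
      xs ∈ stdSimplex ℝ (Fin l) ∧ ys ∈ stdSimplex ℝ (Fin m) ∧
      (∀ y ∈ stdSimplex ℝ (Fin m), v ≤ matPayoff Z xs y) ∧
      (∀ x ∈ stdSimplex ℝ (Fin l), matPayoff Z x ys ≤ v) := by
  -- Player 2's strategy is the minimizing variable of the saddle point.
  obtain ⟨ys, hys, xs, hxs, hsaddle⟩ := (Matrix.toLinearMap₂' ℝ Z).flip.exists_isSaddlePointOn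
    (convex_stdSimplex ℝ _) (isCompact_stdSimplex ℝ _) ⟨_, single_mem_stdSimplex ℝ ⟨0, hm⟩⟩
    (convex_stdSimplex ℝ _) (isCompact_stdSimplex ℝ _) ⟨_, single_mem_stdSimplex ℝ ⟨0, hl⟩⟩
  simp only [IsSaddlePointOn, LinearMap.flip_apply, ← matPayoff_eq_toLinearMap₂'] at hsaddle
  exact ⟨matPayoff Z xs ys, xs, ys, hxs, hys, fun y hy ↦ hsaddle y hy xs hxs,
    fun x hx ↦ hsaddle ys hys x hx⟩
end

section
/- The value of a matrix game Z ∈ ℝ^{l×m} is the optimal value of the dual linear program 'minimise v subject to Σ_{j=1}^m z_{ij} y_j ≤ v for all 1 ≤ i ≤ l, y_j ≥ 0 for all 1 ≤ j ≤ m, and Σ_{j=1}^m y_j = 1': that is, val(Z) = min_{y∈Δ_m} max_{1≤i≤l} Σ_{j=1}^m z_{ij} y_j, and any y* ∈ Δ_m attaining this minimum is an optimal strategy for player 2, i.e., xᵀZy* ≤ val(Z) for all x ∈ Δ_l. -/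
/-!
Let `y₀` minimise `y ↦ maxᵢ (Z y)ᵢ` over `Δ_m`, with minimum `v`. The convex set `Z Δ_m` misses
the open orthant `{b | ∀ i, bᵢ < v}`, so a hyperplane separates them; as the orthant is unbounded
below, the normal of that hyperplane is nonnegative, and normalised it is an `x₀ ∈ Δ_l` with
`v ≤ x₀ᵀ Z y` for all `y ∈ Δ_m`. Hence `(x₀, y₀)` is a saddle point of `xᵀ Z y` with value `v`.
-/

open Finset

/-- The value of the matrix game `Z`: `val(Z) = max_{x ∈ Δ_l} min_{y ∈ Δ_m} xᵀZy`
(the extrema are attained, so the supremum/infimum agree with the maximum/minimum). -/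
noncomputable def matVal {l m : ℕ} (Z : Matrix (Fin l) (Fin m) ℝ) : ℝ :=
  sSup ((fun x => sInf ((fun y => matPayoff Z x y) '' stdSimplex ℝ (Fin m))) ''
    stdSimplex ℝ (Fin l))

open Matrix

theorem csSup_image_csInf_image_eq_of_saddle {α β γ : Type*} [ConditionallyCompleteLattice γ]
    {F : α → β → γ} {A : Set α} {B : Set β} (hbdd : ∀ x ∈ A, BddBelow (F x '' B))
    {x₀ : α} (hx₀ : x₀ ∈ A) {y₀ : β} (hy₀ : y₀ ∈ B) {v : γ}
    (hle : ∀ x ∈ A, F x y₀ ≤ v) (hge : ∀ y ∈ B, v ≤ F x₀ y) :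
    sSup ((fun x => sInf (F x '' B)) '' A) = v := by
  have hx₀_least : IsLeast (F x₀ '' B) v :=
    ⟨(hle x₀ hx₀).antisymm (hge y₀ hy₀) ▸ Set.mem_image_of_mem _ hy₀,
      by rintro _ ⟨y, hy, rfl⟩; exact hge y hy⟩
  refine IsGreatest.csSup_eq ⟨⟨x₀, hx₀, hx₀_least.csInf_eq⟩, ?_⟩
  rintro _ ⟨x, hx, rfl⟩
  exact (csInf_le (hbdd x hx) (Set.mem_image_of_mem _ hy₀)).trans (hle x hx)

section Simplex

variable {ι : Type*} [Fintype ι]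

theorem dotProduct_le_sup'_of_mem_stdSimplex {x : ι → ℝ} (hx : x ∈ stdSimplex ℝ ι)
    (h : (univ : Finset ι).Nonempty) (b : ι → ℝ) : x ⬝ᵥ b ≤ univ.sup' h b :=
  calc x ⬝ᵥ b ≤ ∑ i, x i * univ.sup' h b :=
        sum_le_sum fun i hi => mul_le_mul_of_nonneg_left (le_sup' b hi) (hx.1 i)
    _ = univ.sup' h b := by rw [← sum_mul, hx.2, one_mul]

theorem nonneg_of_forall_le_imp_dotProduct_le {w : ι → ℝ} {v u : ℝ}
    (h : ∀ b : ι → ℝ, (∀ i, b i ≤ v) → w ⬝ᵥ b ≤ u) (i : ι) : 0 ≤ w i := by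
  classical
  by_contra! hwi
  set K := u - w ⬝ᵥ Function.const ι v
  have hc : 0 ≤ (|K| + 1) / -w i := div_nonneg (by positivity) (by linarith)
  have hle := h (Function.const ι v - Pi.single i ((|K| + 1) / -w i)) fun j => by
    by_cases hj : j = i
    · subst hj; simpa using hc
    · simp [hj]
  rw [dotProduct_sub, dotProduct_single, mul_div_assoc', div_neg,
    mul_div_cancel_left₀ _ hwi.ne] at hle
  linarith [le_abs_self K]

theorem exists_mem_stdSimplex_forall_le_dotProduct {t : Set (ι → ℝ)} (ht : Convex ℝ t)
    (hne : t.Nonempty) {v : ℝ} (hv : ∀ b ∈ t, ∃ i, v ≤ b i) :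
    ∃ x ∈ stdSimplex ℝ ι, ∀ b ∈ t, v ≤ x ⬝ᵥ b := by
  classical
  set s : Set (ι → ℝ) := Set.univ.pi fun _ => Set.Iio v
  have hst : Disjoint s t := Set.disjoint_left.2 fun b hbs hbt => by
    obtain ⟨i, hi⟩ := hv b hbt
    exact (hbs i trivial).not_ge hi
  obtain ⟨f, u, hfs, hft⟩ := geometric_hahn_banach_open
    (convex_pi fun _ _ => convex_Iio v) (isOpen_set_pi Set.finite_univ fun _ _ => isOpen_Iio)
    ht hst
  set w := (dotProductEquiv ℝ ι).symm f.toLinearMap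
  have hf : ∀ b, f b = w ⬝ᵥ b := fun b =>
    (LinearMap.congr_fun ((dotProductEquiv ℝ ι).apply_symm_apply f.toLinearMap) b).symm
  have hclosure : ∀ b : ι → ℝ, (∀ i, b i ≤ v) → w ⬝ᵥ b ≤ u := by
    intro b hb
    have hbs : b ∈ closure s := by
      simp only [s, closure_pi_set, closure_Iio]
      exact fun i _ => hb i
    rw [← hf]
    exact closure_minimal (fun b hb => (hfs b hb).le)
      (isClosed_le f.continuous continuous_const) hbs
  have hw : ∀ i, 0 ≤ w i := nonneg_of_forall_le_imp_dotProduct_le hclosure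
  have hvu : v * ∑ i, w i ≤ u := by
    simpa [dotProduct, mul_sum, mul_comm] using hclosure (fun _ => v) fun _ => le_rfl
  have hw_pos : 0 < ∑ i, w i := by
    by_contra! hw_sum
    have hw_zero : w = 0 := funext fun i =>
      (sum_eq_zero_iff_of_nonneg fun i _ => hw i).1 (hw_sum.antisymm (sum_nonneg fun i _ => hw i))
        i (mem_univ i)
    obtain ⟨b, hb⟩ := hne
    have hlt := hfs (fun _ => v - 1) fun i _ => show v - 1 < v by linarith
    have hge := hft b hb
    simp only [hf, hw_zero, zero_dotProduct] at hlt hge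
    linarith
  refine ⟨(∑ i, w i)⁻¹ • w, ⟨fun i => ?_, ?_⟩, fun b hb => ?_⟩
  · exact mul_nonneg (inv_nonneg.2 hw_pos.le) (hw i)
  · simp [← mul_sum, hw_pos.ne']
  calc v = (∑ i, w i)⁻¹ * (v * ∑ i, w i) := by field_simp
    _ ≤ (∑ i, w i)⁻¹ * (w ⬝ᵥ b) := by gcongr; exact hvu.trans (hf b ▸ hft b hb)
    _ = ((∑ i, w i)⁻¹ • w) ⬝ᵥ b := by rw [smul_dotProduct, smul_eq_mul]

end Simplex

theorem matPayoff_eq_dotProduct_mulVec {l m : ℕ} (Z : Matrix (Fin l) (Fin m) ℝ)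
    (x : Fin l → ℝ) (y : Fin m → ℝ) : matPayoff Z x y = x ⬝ᵥ Z *ᵥ y := by
  simp [matPayoff, dotProduct, mulVec, mul_sum, mul_assoc]

/-- The value of a matrix game is the optimal value of the dual LP:
`val(Z) = min_{y ∈ Δ_m} max_i ∑_j z_{ij} y_j` (the minimum being attained), and any `y⋆`
attaining this minimum is an optimal strategy for player 2. -/
theorem matrix_game_dual_LP (l m : ℕ) (hl : 1 ≤ l) (hm : 1 ≤ m)
    (Z : Matrix (Fin l) (Fin m) ℝ) :
    IsLeast {w : ℝ | ∃ y ∈ stdSimplex ℝ (Fin m),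
        w = Finset.univ.sup' ⟨⟨0, hl⟩, Finset.mem_univ _⟩ (fun i => ∑ j, Z i j * y j)}
      (matVal Z) ∧
    ∀ y ∈ stdSimplex ℝ (Fin m),
      Finset.univ.sup' ⟨⟨0, hl⟩, Finset.mem_univ _⟩ (fun i => ∑ j, Z i j * y j) = matVal Z →
      ∀ x ∈ stdSimplex ℝ (Fin l), matPayoff Z x y ≤ matVal Z := by
  have hrows : (univ : Finset (Fin l)).Nonempty := ⟨⟨0, hl⟩, mem_univ _⟩
  obtain ⟨y₀, hy₀, hy₀_min⟩ := (isCompact_stdSimplex ℝ (Fin m)).exists_isMinOn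
    (f := fun y => univ.sup' hrows (Z *ᵥ y)) ⟨_, single_mem_stdSimplex ℝ (⟨0, hm⟩ : Fin m)⟩
    (Continuous.finset_sup'_apply hrows fun i _ => by fun_prop).continuousOn
  set v := univ.sup' hrows (Z *ᵥ y₀)
  obtain ⟨x₀, hx₀, hx₀_ge⟩ := exists_mem_stdSimplex_forall_le_dotProduct
    ((convex_stdSimplex ℝ _).linear_image Z.mulVecLin) ⟨_, y₀, hy₀, rfl⟩ (v := v) (by
      rintro _ ⟨y, hy, rfl⟩
      obtain ⟨i, -, hi⟩ := exists_mem_eq_sup' hrows (Z *ᵥ y)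
      exact ⟨i, (hy₀_min hy).trans_eq hi⟩)
  have hval : matVal Z = v := csSup_image_csInf_image_eq_of_saddle (F := matPayoff Z)
    (fun x _ => ((isCompact_stdSimplex ℝ _).image (by unfold matPayoff; fun_prop)).bddBelow)
    hx₀ hy₀
    (fun x hx => (matPayoff_eq_dotProduct_mulVec Z x y₀).trans_le
      (dotProduct_le_sup'_of_mem_stdSimplex hx hrows _))
    (fun y hy => (hx₀_ge _ ⟨y, hy, rfl⟩).trans_eq (matPayoff_eq_dotProduct_mulVec Z x₀ y).symm)
  refine ⟨⟨⟨y₀, hy₀, hval⟩, ?_⟩, fun y hy hy_val x hx => ?_⟩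
  · rintro _ ⟨y, hy, rfl⟩
    exact hval ▸ hy₀_min hy
  · rw [matPayoff_eq_dotProduct_mulVec, ← hy_val]
    exact dotProduct_le_sup'_of_mem_stdSimplex hx hrows _
end

section
/- Linear complementarity characterization of Nash equilibria in bimatrix games: for a bimatrix game Z1, Z2 ∈ ℝ^{l×m}, a pair of probability vectors (x,y) ∈ Δ_l × Δ_m is a Nash equilibrium with expected utilities (u,v) = (xᵀZ1y, xᵀZ2y) if and only if xᵀ(𝟙u − Z1y) = 0, yᵀ(𝟙v − Z2ᵀx) = 0, 𝟙u − Z1y ≥ 0 componentwise, and 𝟙v − Z2ᵀx ≥ 0 componentwise, where 𝟙 denotes the all-ones vector of the appropriate dimension. -/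
open Finset

lemma matPayoff_row {l m : ℕ} (Z : Matrix (Fin l) (Fin m) ℝ)
    (x : Fin l → ℝ) (y : Fin m → ℝ) :
    matPayoff Z x y = ∑ i, x i * ∑ j, Z i j * y j := by
  unfold matPayoff
  refine Finset.sum_congr rfl fun i _ => ?_
  rw [Finset.mul_sum]
  refine Finset.sum_congr rfl fun j _ => ?_
  ring

lemma matPayoff_col {l m : ℕ} (Z : Matrix (Fin l) (Fin m) ℝ)
    (x : Fin l → ℝ) (y : Fin m → ℝ) :
    matPayoff Z x y = ∑ j, y j * ∑ i, Z i j * x i := by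
  unfold matPayoff
  rw [Finset.sum_comm]
  refine Finset.sum_congr rfl fun j _ => ?_
  rw [Finset.mul_sum]
  refine Finset.sum_congr rfl fun i _ => ?_
  ring

lemma pure_mem_stdSimplex {n : ℕ} (i : Fin n) :
    (fun k => if k = i then (1:ℝ) else 0) ∈ stdSimplex ℝ (Fin n) := by
  constructor
  · intro k; dsimp only; split <;> norm_num
  · simp

/-- Linear complementarity characterization of Nash equilibria in bimatrix games:
`(x, y) ∈ Δ_l × Δ_m` is a Nash equilibrium of the bimatrix game `(Z1, Z2)` with expected
utilities `(u, v) = (xᵀZ1y, xᵀZ2y)` if and only if `xᵀ(𝟙u − Z1y) = 0`, `yᵀ(𝟙v − Z2ᵀx) = 0`,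
`𝟙u − Z1y ≥ 0` and `𝟙v − Z2ᵀx ≥ 0` componentwise. -/
theorem bimatrix_NE_iff_LCP (l m : ℕ) (hl : 1 ≤ l) (hm : 1 ≤ m)
    (Z1 Z2 : Matrix (Fin l) (Fin m) ℝ)
    (x : Fin l → ℝ) (y : Fin m → ℝ)
    (hx : x ∈ stdSimplex ℝ (Fin l)) (hy : y ∈ stdSimplex ℝ (Fin m))
    (u v : ℝ) (hu : u = matPayoff Z1 x y) (hv : v = matPayoff Z2 x y) :
    ((∀ x' ∈ stdSimplex ℝ (Fin l), matPayoff Z1 x' y ≤ matPayoff Z1 x y) ∧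
     (∀ y' ∈ stdSimplex ℝ (Fin m), matPayoff Z2 x y' ≤ matPayoff Z2 x y)) ↔
      (∑ i, x i * (u - ∑ j, Z1 i j * y j) = 0 ∧
       ∑ j, y j * (v - ∑ i, Z2 i j * x i) = 0 ∧
       (∀ i, 0 ≤ u - ∑ j, Z1 i j * y j) ∧
       (∀ j, 0 ≤ v - ∑ i, Z2 i j * x i)) := by
  obtain ⟨hx0, hx1⟩ := hx
  obtain ⟨hy0, hy1⟩ := hy
  have hux : ∑ i, x i * (u - ∑ j, Z1 i j * y j) = 0 := by
    have : ∑ i, x i * (u - ∑ j, Z1 i j * y j)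
        = (∑ i, x i) * u - matPayoff Z1 x y := by
      rw [matPayoff_row, Finset.sum_mul, ← Finset.sum_sub_distrib]
      refine Finset.sum_congr rfl fun i _ => ?_; ring
    rw [this, hx1, hu]; ring
  have hvy : ∑ j, y j * (v - ∑ i, Z2 i j * x i) = 0 := by
    have : ∑ j, y j * (v - ∑ i, Z2 i j * x i)
        = (∑ j, y j) * v - matPayoff Z2 x y := by
      rw [matPayoff_col, Finset.sum_mul, ← Finset.sum_sub_distrib]
      refine Finset.sum_congr rfl fun j _ => ?_; ring
    rw [this, hy1, hv]; ring
  constructor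
  · rintro ⟨h1, h2⟩
    refine ⟨hux, hvy, ?_, ?_⟩
    · intro i
      have := h1 _ (pure_mem_stdSimplex i)
      rw [matPayoff_row, ← hu] at this
      have heq : ∑ k, (if k = i then (1:ℝ) else 0) * ∑ j, Z1 k j * y j
          = ∑ j, Z1 i j * y j := by
        simp [ite_mul]
      rw [heq] at this
      linarith
    · intro j
      have := h2 _ (pure_mem_stdSimplex j)
      rw [matPayoff_col, ← hv] at this
      have heq : ∑ k, (if k = j then (1:ℝ) else 0) * ∑ i, Z2 i k * x i
          = ∑ i, Z2 i j * x i := by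
        simp [ite_mul]
      rw [heq] at this
      linarith
  · rintro ⟨-, -, h3, h4⟩
    constructor
    · intro x' ⟨hx'0, hx'1⟩
      rw [matPayoff_row, ← hu]
      calc ∑ i, x' i * ∑ j, Z1 i j * y j ≤ ∑ i, x' i * u := by
            refine Finset.sum_le_sum fun i _ => ?_
            have := h3 i
            nlinarith [hx'0 i]
        _ = u := by rw [← Finset.sum_mul, hx'1, one_mul]
    · intro y' ⟨hy'0, hy'1⟩
      rw [matPayoff_col, ← hv]
      calc ∑ j, y' j * ∑ i, Z2 i j * x i ≤ ∑ j, y' j * v := by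
            refine Finset.sum_le_sum fun j _ => ?_
            have := h4 j
            nlinarith [hy'0 j]
        _ = v := by rw [← Finset.sum_mul, hy'1, one_mul]
end
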